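/- arXiv:0910.0639 — 3 statements merged into one kernel-verified Lean document; each statement's English description precedes it below -/
import Mathlib

section
/- Let u(x) be the even function equal to x^{-α} sin(x^β) for x > 0, with α > 1 and β > α + 1. Then u ∈ L¹(ℝ) ∩ L²(ℝ), and the Miura potential q = u' + u² equals β·sign(x)·|x|^{β-α-1}·cos|x|^β + q̃(x) for some bounded function q̃; in particular q is unbounded. -/
/-!
Since `α > 0`, the formula `|x|^(-α) sin |x|^β` already vanishes at `0`, so `u` is this function.
It is bounded by `1` (use `|sin y| ≤ y` near the origin) and by `|x|^(-α)`, hence dominated by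
a multiple of `(1 + |x|)^(-α)`, which is integrable as `α > 1`; `u² ≤ |u|` then gives `u ∈ L²`.
Off the origin `u' = sign x · (-α |x|^(-α-1) sin |x|^β + β |x|^(β-α-1) cos |x|^β)`, and the first
summand and `u²` stay bounded because `α + 1 ≤ β`. At the points `xₙ = (2πn)^(1/β)` the sine
vanishes and the cosine is one, so `q(xₙ) = β xₙ^(β-α-1) → ∞`.
-/

open MeasureTheory Set Real Filter

lemma abs_sign_le_one (x : ℝ) : |sign x| ≤ 1 := by
  rcases sign_apply_eq x with h | h | h <;> simp [h]

lemma hasDerivAt_comp_abs {g : ℝ → ℝ} {g' x : ℝ} (hx : x ≠ 0) (hg : HasDerivAt g g' |x|) :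
    HasDerivAt (fun y => g |y|) (sign x * g') x := by
  rcases hx.lt_or_gt with hneg | hpos
  · exact (hg.comp x (hasDerivAt_abs_neg hneg)).congr_deriv (by rw [sign_of_neg hneg]; ring)
  · exact (hg.comp x (hasDerivAt_abs_pos hpos)).congr_deriv (by rw [sign_of_pos hpos]; ring)

lemma le_two_rpow_mul_one_add_abs_rpow_neg {a x γ : ℝ} (hγ : 0 ≤ γ) (h1 : a ≤ 1)
    (h2 : 1 < |x| → a ≤ |x| ^ (-γ)) : a ≤ 2 ^ γ * (1 + |x|) ^ (-γ) := by
  have h2γ : (2 : ℝ) ^ γ * 2 ^ (-γ) = 1 := by rw [← rpow_add two_pos]; simp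
  rcases le_or_gt |x| 1 with hle | hgt
  · calc a ≤ 2 ^ γ * 2 ^ (-γ) := h2γ ▸ h1
      _ ≤ 2 ^ γ * (1 + |x|) ^ (-γ) := by
          gcongr _ * ?_
          exact rpow_le_rpow_of_nonpos (by positivity) (by linarith) (by linarith)
  · calc a ≤ 2 ^ γ * 2 ^ (-γ) * |x| ^ (-γ) := by rw [h2γ, one_mul]; exact h2 hgt
      _ = 2 ^ γ * (2 * |x|) ^ (-γ) := by rw [mul_rpow zero_le_two (abs_nonneg x), mul_assoc]
      _ ≤ 2 ^ γ * (1 + |x|) ^ (-γ) := by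
          gcongr _ * ?_
          exact rpow_le_rpow_of_nonpos (by positivity) (by linarith) (by linarith)

lemma integrable_of_abs_le_one_of_abs_le_rpow_neg {v : ℝ → ℝ} {γ : ℝ} (hγ : 1 < γ)
    (hv : AEStronglyMeasurable v) (h1 : ∀ x, |v x| ≤ 1)
    (h2 : ∀ x, 1 < |x| → |v x| ≤ |x| ^ (-γ)) : Integrable v :=
  ((integrable_one_add_norm (E := ℝ) (μ := volume) (r := γ) (by simpa)).const_mul (2 ^ γ)).mono'
    hv (Eventually.of_forall fun x =>
      le_two_rpow_mul_one_add_abs_rpow_neg (by linarith) (h1 x) (h2 x))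

lemma abs_rpow_neg_mul_sin_rpow_le_one {γ β : ℝ} (hγ : 0 < γ) (hγβ : γ ≤ β) (x : ℝ) :
    |x| ^ (-γ) * |sin (|x| ^ β)| ≤ 1 := by
  rcases eq_or_ne x 0 with rfl | hx
  · simp [zero_rpow (neg_ne_zero.2 hγ.ne')]
  have hx_pos : 0 < |x| := abs_pos.2 hx
  rcases le_or_gt |x| 1 with hle | hgt
  · calc |x| ^ (-γ) * |sin (|x| ^ β)| ≤ |x| ^ (-γ) * |x| ^ β := by
          gcongr
          simpa [abs_of_pos (rpow_pos_of_pos hx_pos β)] using abs_sin_le_abs (x := |x| ^ β)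
      _ = |x| ^ (β - γ) := by rw [← rpow_add hx_pos]; ring_nf
      _ ≤ 1 := rpow_le_one hx_pos.le hle (by linarith)
  · calc |x| ^ (-γ) * |sin (|x| ^ β)| ≤ |x| ^ (-γ) * 1 := by gcongr; exact abs_sin_le_one _
      _ ≤ 1 := by rw [mul_one]; exact rpow_le_one_of_one_le_of_nonpos hgt.le (by linarith)

lemma hasDerivAt_rpow_neg_mul_sin_rpow (α β : ℝ) {t : ℝ} (ht : 0 < t) :
    HasDerivAt (fun y : ℝ => y ^ (-α) * sin (y ^ β))
      (-α * t ^ (-α - 1) * sin (t ^ β) + β * t ^ (β - α - 1) * cos (t ^ β)) t := by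
  have hpow : HasDerivAt (fun y : ℝ => y ^ β) (β * t ^ (β - 1)) t :=
    hasDerivAt_rpow_const (Or.inl ht.ne')
  refine ((hasDerivAt_rpow_const (Or.inl ht.ne')).mul
    ((hasDerivAt_sin _).comp t hpow)).congr_deriv ?_
  have hsplit : t ^ (β - α - 1) = t ^ (-α) * t ^ (β - 1) := by
    rw [← rpow_add ht]; ring_nf
  simp only [Function.comp_apply, hsplit]; ring

noncomputable def evenChirp (α β x : ℝ) : ℝ := |x| ^ (-α) * sin (|x| ^ β)

noncomputable def miuraRemainder (α β x : ℝ) : ℝ :=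
  sign x * (-α * |x| ^ (-α - 1) * sin (|x| ^ β)) + evenChirp α β x ^ 2

namespace evenChirp

variable {α β : ℝ}

lemma abs_eq (x : ℝ) : |evenChirp α β x| = |x| ^ (-α) * |sin (|x| ^ β)| := by
  rw [evenChirp, abs_mul, abs_of_nonneg (rpow_nonneg (abs_nonneg x) _)]

lemma abs_le_one (hα : 0 < α) (hαβ : α ≤ β) (x : ℝ) : |evenChirp α β x| ≤ 1 :=
  abs_eq x ▸ abs_rpow_neg_mul_sin_rpow_le_one hα hαβ x

lemma abs_le_rpow_neg (x : ℝ) : |evenChirp α β x| ≤ |x| ^ (-α) :=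
  abs_eq x ▸ mul_le_of_le_one_right (rpow_nonneg (abs_nonneg x) _) (abs_sin_le_one _)

lemma integrable (hα : 1 < α) (hαβ : α ≤ β) : Integrable (evenChirp α β) :=
  integrable_of_abs_le_one_of_abs_le_rpow_neg hα
    (Measurable.aestronglyMeasurable (by unfold evenChirp; fun_prop))
    (abs_le_one (by linarith) hαβ) fun x _ => abs_le_rpow_neg x

lemma integrable_sq (hα : 1 < α) (hαβ : α ≤ β) : Integrable fun x => evenChirp α β x ^ 2 := by
  refine (integrable hα hαβ).norm.mono' ((integrable hα hαβ).aestronglyMeasurable.pow 2)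
    (Eventually.of_forall fun x => ?_)
  rw [norm_pow, Real.norm_eq_abs, sq]
  exact mul_le_of_le_one_left (abs_nonneg _) (abs_le_one (by linarith) hαβ x)

lemma hasDerivAt {x : ℝ} (hx : x ≠ 0) :
    HasDerivAt (evenChirp α β) (sign x *
      (-α * |x| ^ (-α - 1) * sin (|x| ^ β) + β * |x| ^ (β - α - 1) * cos (|x| ^ β))) x :=
  hasDerivAt_comp_abs hx (hasDerivAt_rpow_neg_mul_sin_rpow α β (abs_pos.2 hx))

lemma deriv_add_sq {x : ℝ} (hx : x ≠ 0) :
    deriv (evenChirp α β) x + evenChirp α β x ^ 2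
      = β * sign x * |x| ^ (β - α - 1) * cos (|x| ^ β) + miuraRemainder α β x := by
  rw [(hasDerivAt hx).deriv, miuraRemainder]
  ring

lemma deriv_add_sq_of_rpow_eq {x : ℝ} (hx : 0 < x) {n : ℕ} (hxn : x ^ β = n * (2 * π)) :
    deriv (evenChirp α β) x + evenChirp α β x ^ 2 = β * x ^ (β - α - 1) := by
  have hsin : sin (x ^ β) = 0 := by
    rw [hxn, show (n : ℝ) * (2 * π) = (2 * n : ℕ) * π by push_cast; ring, sin_nat_mul_pi]
  rw [(hasDerivAt hx.ne').deriv, evenChirp, sign_of_pos hx, abs_of_pos hx, hsin, hxn,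
    cos_nat_mul_two_pi]
  ring

lemma not_bounded_deriv_add_sq (hβ : 0 < β) (hαβ : α + 1 < β) :
    ¬ ∃ M : ℝ, ∀ x : ℝ, |deriv (evenChirp α β) x + evenChirp α β x ^ 2| ≤ M := by
  rintro ⟨M, hM⟩
  set xs : ℕ → ℝ := fun n => (n * (2 * π)) ^ β⁻¹
  have hxs : Tendsto xs atTop atTop :=
    (tendsto_rpow_atTop (inv_pos.2 hβ)).comp
      (tendsto_natCast_atTop_atTop.atTop_mul_const (by positivity))
  have hq : Tendsto (fun n => β * xs n ^ (β - α - 1)) atTop atTop :=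
    ((tendsto_rpow_atTop (by linarith)).comp hxs).const_mul_atTop hβ
  obtain ⟨n, hn, hn1⟩ := ((hq.eventually_gt_atTop M).and (eventually_gt_atTop 0)).exists
  have hx : 0 < xs n := rpow_pos_of_pos (by positivity) _
  have hxn : xs n ^ β = n * (2 * π) := rpow_inv_rpow (by positivity) hβ.ne'
  have := (le_abs_self _).trans (hM (xs n))
  rw [deriv_add_sq_of_rpow_eq hx hxn] at this
  linarith

end evenChirp

lemma abs_miuraRemainder_le {α β : ℝ} (hα : 0 < α) (hαβ : α + 1 ≤ β) (x : ℝ) :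
    |miuraRemainder α β x| ≤ α + 1 := by
  have hsin : |x| ^ (-α - 1) * |sin (|x| ^ β)| ≤ 1 := by
    simpa only [neg_add'] using abs_rpow_neg_mul_sin_rpow_le_one (by linarith) hαβ x
  have hu : |evenChirp α β x| ^ 2 ≤ 1 :=
    pow_le_one₀ (abs_nonneg _) (evenChirp.abs_le_one hα (by linarith) x)
  calc |miuraRemainder α β x|
      ≤ |sign x * (-α * |x| ^ (-α - 1) * sin (|x| ^ β))| + |evenChirp α β x ^ 2| :=
        abs_add_le _ _
    _ = |sign x| * (α * (|x| ^ (-α - 1) * |sin (|x| ^ β)|)) + |evenChirp α β x| ^ 2 := by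
        rw [abs_pow, abs_mul, abs_mul, abs_mul, abs_neg, abs_of_pos hα,
          abs_of_nonneg (rpow_nonneg (abs_nonneg x) _), mul_assoc]
    _ ≤ 1 * (α * 1) + 1 := by gcongr; exact abs_sign_le_one x
    _ = α + 1 := by ring

/-- For the even function `u(x) = |x|^{-α} sin(|x|^β)` with `α > 1`, `β > α + 1`,
one has `u ∈ L¹(ℝ) ∩ L²(ℝ)`, and the Miura potential `q = u' + u²` equals
`β sign(x) |x|^{β-α-1} cos(|x|^β)` plus a bounded function; in particular `q`
is unbounded. -/
theorem stmt_6 (α β : ℝ) (hα : 1 < α) (hβ : α + 1 < β) (u : ℝ → ℝ)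
    (hu : ∀ x : ℝ, x ≠ 0 → u x = |x| ^ (-α) * Real.sin (|x| ^ β))
    (hu0 : u 0 = 0) :
    (Integrable u ∧ Integrable (fun x => (u x) ^ 2))
    ∧ (∃ qt : ℝ → ℝ, (∃ M : ℝ, ∀ x, |qt x| ≤ M) ∧
        ∀ x : ℝ, x ≠ 0 →
          deriv u x + (u x) ^ 2
            = β * Real.sign x * |x| ^ (β - α - 1) * Real.cos (|x| ^ β) + qt x)
    ∧ ¬ ∃ M : ℝ, ∀ x : ℝ, |deriv u x + (u x) ^ 2| ≤ M := by
  obtain rfl : u = evenChirp α β := by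
    funext x
    rcases eq_or_ne x 0 with rfl | hx
    · simp [hu0, evenChirp, zero_rpow (neg_ne_zero.2 (by linarith : α ≠ 0))]
    · exact hu x hx
  exact ⟨⟨evenChirp.integrable hα (by linarith), evenChirp.integrable_sq hα (by linarith)⟩,
    ⟨miuraRemainder α β, ⟨α + 1, abs_miuraRemainder_le (by linarith) hβ.le⟩,
      fun _ => evenChirp.deriv_add_sq⟩,
    evenChirp.not_bounded_deriv_add_sq (by linarith) hβ⟩
end

section
/- Suppose w_+ ∈ L¹(0,∞)∩L²(0,∞) and w_- ∈ L¹(-∞,0)∩L²(-∞,0) are real-valued and α ≥ 0. Define y_+(x) = exp(∫₀ˣ w_+) for x > 0, y_-(x) = exp(∫₀ˣ w_-) for x < 0, extend y_+ to ℝ⁻ by y_+(x) = y_-(x)(1 + α∫ₓ⁰ y_-(s)⁻² ds) and y_- to ℝ⁺ by y_-(x) = y_+(x)(1 + α∫₀ˣ y_+(s)⁻² ds). Then u_+ := y_+'/y_+ belongs to L²(ℝ)∩L¹(ℝ⁺), u_- := y_-'/y_- belongs to L²(ℝ)∩L¹(ℝ⁻), and v := u_- - u_+ is continuous with v(0) =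 α. -/
open MeasureTheory Set

/-!
Glue `w₊` and `w₋` into one `w ∈ L¹(ℝ)` and put `ρ(x) = exp(-2 ∫₀ˣ w)`, which equals `y₋⁻²` on
`ℝ⁻` and `y₊⁻²` on `ℝ⁺`. The formulas for `u₊` and `u₋` say that off the origin `u₋ - u₊` is
`v(x) = α ρ(x) / (1 + α |∫₀ˣ ρ|)`, a continuous function with `v(0) = α`. Since `w ∈ L¹`, `ρ` is
pinched between two positive constants, so `|∫₀ˣ ρ|` grows linearly and `v = O(1/(1 + |x|))` is in
`L²`. Hence `u₊ = w₋ - v` on `ℝ⁻` and `u₋ = w₊ + v` on `ℝ⁺` are square integrable.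
-/

theorem integrable_of_integrableOn_Iio_of_integrableOn_Ioi {E : Type*} [NormedAddCommGroup E]
    {μ : Measure ℝ} [NullSingletonClass μ] {f : ℝ → E} {a : ℝ}
    (h₁ : IntegrableOn f (Iio a) μ) (h₂ : IntegrableOn f (Ioi a) μ) : Integrable f μ := by
  rw [← integrableOn_univ, ← Iic_union_Ioi (a := a), integrableOn_union]
  exact ⟨(integrableOn_Iic_iff_integrableOn_Iio).mpr h₁, h₂⟩

theorem abs_intervalIntegral_le_integral_abs {f : ℝ → ℝ} (hf : Integrable f) (a b : ℝ) :
    |∫ t in a..b, f t| ≤ ∫ t, |f t| :=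
  (intervalIntegral.norm_integral_le_integral_norm_uIoc (f := f)).trans
    (setIntegral_le_integral hf.norm (ae_of_all _ fun _ => norm_nonneg _))

theorem mul_abs_sub_le_abs_intervalIntegral {ρ : ℝ → ℝ} {c a b : ℝ}
    (hρ : IntervalIntegrable ρ volume a b) (hcρ : ∀ x, c ≤ ρ x) :
    c * |b - a| ≤ |∫ t in a..b, ρ t| := by
  have key : ∀ {a b : ℝ}, a ≤ b → IntervalIntegrable ρ volume a b →
      c * |b - a| ≤ |∫ t in a..b, ρ t| := by
    intro a b hab hρ
    have h := intervalIntegral.integral_mono_on hab intervalIntegrable_const hρ fun t _ => hcρ t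
    rw [intervalIntegral.integral_const, smul_eq_mul] at h
    rw [abs_of_nonneg (sub_nonneg.mpr hab), mul_comm]
    exact h.trans (le_abs_self _)
  rcases le_total a b with hab | hba
  · exact key hab hρ
  · rw [abs_sub_comm, intervalIntegral.integral_symm, abs_neg]
    exact key hba hρ.symm

theorem integrable_sq_of_abs_le_div_one_add_mul_abs {f : ℝ → ℝ} {C c : ℝ}
    (hf : AEStronglyMeasurable f) (hc : 0 < c) (hfC : ∀ x, |f x| ≤ C / (1 + c * |x|)) :
    Integrable fun x => f x ^ 2 := by
  set m := min 1 (c ^ 2)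
  have hm : 0 < m := lt_min one_pos (pow_pos hc 2)
  refine (integrable_inv_one_add_sq.const_mul (C ^ 2 / m)).mono' (hf.pow 2)
    (ae_of_all _ fun x => ?_)
  have hmd : m * (1 + x ^ 2) ≤ (1 + c * |x|) ^ 2 := by
    nlinarith [min_le_left 1 (c ^ 2), min_le_right 1 (c ^ 2), sq_abs x, abs_nonneg x]
  calc ‖f x ^ 2‖ = |f x| ^ 2 := by rw [Real.norm_eq_abs, abs_pow]
    _ ≤ (C / (1 + c * |x|)) ^ 2 := pow_le_pow_left₀ (abs_nonneg _) (hfC x) 2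
    _ = C ^ 2 / (1 + c * |x|) ^ 2 := div_pow _ _ _
    _ ≤ C ^ 2 / (m * (1 + x ^ 2)) := by gcongr
    _ = C ^ 2 / m * (1 + x ^ 2)⁻¹ := by rw [div_mul_eq_div_div, div_eq_mul_inv]

theorem integrableOn_sq_of_eqOn_add {X : Type*} [MeasurableSpace X] {μ : Measure X}
    {f g h : X → ℝ} {s : Set X} (hs : MeasurableSet s) (hf : IntegrableOn f s μ)
    (hf₂ : IntegrableOn (fun x => f x ^ 2) s μ) (hg : MemLp g 2 μ) (hfgh : EqOn h (f + g) s) :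
    IntegrableOn (fun x => h x ^ 2) s μ := by
  have hfg : MemLp (f + g) 2 (μ.restrict s) :=
    ((memLp_two_iff_integrable_sq hf.aestronglyMeasurable).mpr hf₂).add (hg.restrict s)
  exact IntegrableOn.congr_fun ((memLp_two_iff_integrable_sq hfg.aestronglyMeasurable).mp hfg)
    (fun x hx => by rw [hfgh hx]) hs

/-- The jump `u₋ - u₊` of the two Riccati representatives, in terms of `ρ = y⁻²`. -/
noncomputable def riccatiGap (α : ℝ) (ρ : ℝ → ℝ) (x : ℝ) : ℝ :=
  α * ρ x / (1 + α * |∫ t in (0 : ℝ)..x, ρ t|)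

section riccatiGap

variable {α : ℝ} {ρ : ℝ → ℝ}

theorem riccatiGap_zero : riccatiGap α ρ 0 = α * ρ 0 := by
  simp [riccatiGap]

theorem continuous_riccatiGap (hα : 0 ≤ α) (hρ : Continuous ρ) : Continuous (riccatiGap α ρ) :=
  (continuous_const.mul hρ).div
    (continuous_const.add (continuous_const.mul
      (intervalIntegral.continuous_primitive hρ.intervalIntegrable 0).abs))
    fun x => by positivity

theorem riccatiGap_of_neg (hρ₀ : ∀ x, 0 ≤ ρ x) {g : ℝ → ℝ}
    (hρg : EqOn ρ g (Iio 0)) {x : ℝ} (hx : x < 0) :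
    riccatiGap α ρ x = α * g x / (1 + α * ∫ s in x..(0 : ℝ), g s) := by
  rw [riccatiGap, intervalIntegral.integral_symm, abs_neg,
    abs_of_nonneg (intervalIntegral.integral_nonneg hx.le fun t _ => hρ₀ t), hρg hx,
    intervalIntegral.integral_congr_Ioo_of_le hx.le fun t ht => hρg ht.2]

theorem riccatiGap_of_pos (hρ₀ : ∀ x, 0 ≤ ρ x) {g : ℝ → ℝ}
    (hρg : EqOn ρ g (Ioi 0)) {x : ℝ} (hx : 0 < x) :
    riccatiGap α ρ x = α * g x / (1 + α * ∫ s in (0 : ℝ)..x, g s) := by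
  rw [riccatiGap, abs_of_nonneg (intervalIntegral.integral_nonneg hx.le fun t _ => hρ₀ t),
    hρg hx, intervalIntegral.integral_congr_Ioo_of_le hx.le fun t ht => hρg ht.1]

theorem memLp_riccatiGap (hα : 0 ≤ α) (hρ : Continuous ρ) {c C : ℝ} (hc : 0 < c)
    (hcρ : ∀ x, c ≤ ρ x) (hρC : ∀ x, ρ x ≤ C) : MemLp (riccatiGap α ρ) 2 := by
  have hv := continuous_riccatiGap hα hρ
  refine (memLp_two_iff_integrable_sq hv.aestronglyMeasurable).mpr ?_
  rcases hα.eq_or_lt with rfl | hα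
  · simp [riccatiGap]
  refine integrable_sq_of_abs_le_div_one_add_mul_abs (C := α * C) hv.aestronglyMeasurable
    (mul_pos hα hc) fun x => ?_
  have hG : c * |x| ≤ |∫ t in (0 : ℝ)..x, ρ t| := by
    simpa using mul_abs_sub_le_abs_intervalIntegral (hρ.intervalIntegrable 0 x) hcρ
  have hρx : 0 < ρ x := hc.trans_le (hcρ x)
  rw [riccatiGap, abs_of_nonneg (by positivity)]
  refine div_le_div₀ (mul_nonneg hα.le (hρx.le.trans (hρC x)))
    (mul_le_mul_of_nonneg_left (hρC x) hα.le) (by positivity) ?_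
  rw [mul_assoc]
  gcongr

end riccatiGap

/-- `ρ = y⁻²` for `y(x) = exp ∫₀ˣ w`. -/
noncomputable def riccatiWeight (w : ℝ → ℝ) (x : ℝ) : ℝ :=
  Real.exp (-2 * ∫ t in (0 : ℝ)..x, w t)

section riccatiWeight

variable {w : ℝ → ℝ}

theorem riccatiWeight_pos (x : ℝ) : 0 < riccatiWeight w x :=
  Real.exp_pos _

theorem continuous_riccatiWeight (hw : Integrable w) : Continuous (riccatiWeight w) :=
  (continuous_const.mul
    (intervalIntegral.continuous_primitive (fun _ _ => hw.intervalIntegrable) 0)).rexp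

theorem riccatiWeight_mem_Icc (hw : Integrable w) (x : ℝ) :
    riccatiWeight w x ∈ Icc (Real.exp (-2 * ∫ t, |w t|)) (Real.exp (2 * ∫ t, |w t|)) := by
  obtain ⟨hlo, hhi⟩ := abs_le.mp (abs_intervalIntegral_le_integral_abs hw 0 x)
  exact ⟨Real.exp_le_exp.mpr (by linarith), Real.exp_le_exp.mpr (by linarith)⟩

theorem riccatiWeight_eqOn_inv_sq {f y : ℝ → ℝ} {s : Set ℝ} (hs : ∀ x ∈ s, uIoo 0 x ⊆ s)
    (hwf : EqOn w f s) (hy : ∀ x ∈ s, y x = Real.exp (∫ t in (0 : ℝ)..x, f t)) :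
    EqOn (riccatiWeight w) (fun x => (y x ^ 2)⁻¹) s := fun x hx => by
  show riccatiWeight w x = (y x ^ 2)⁻¹
  rw [riccatiWeight, hy x hx, ← Real.exp_nat_mul, ← Real.exp_neg,
    intervalIntegral.integral_congr_uIoo (hwf.mono (hs x hx))]
  push_cast
  ring_nf

theorem memLp_riccatiGap_riccatiWeight {α : ℝ} (hα : 0 ≤ α) (hw : Integrable w) :
    MemLp (riccatiGap α (riccatiWeight w)) 2 :=
  memLp_riccatiGap hα (continuous_riccatiWeight hw) (Real.exp_pos _)
    (fun x => (riccatiWeight_mem_Icc hw x).1) (fun x => (riccatiWeight_mem_Icc hw x).2)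

end riccatiWeight

theorem stmt_8_general (wp wm : ℝ → ℝ) (α : ℝ) (hα : 0 ≤ α)
    (hwp1 : IntegrableOn wp (Set.Ioi 0))
    (hwp2 : IntegrableOn (fun x => (wp x) ^ 2) (Set.Ioi 0))
    (hwm1 : IntegrableOn wm (Set.Iio 0))
    (hwm2 : IntegrableOn (fun x => (wm x) ^ 2) (Set.Iio 0))
    (yp ym up um : ℝ → ℝ)
    (hyp_pos : ∀ x : ℝ, 0 < x → yp x = Real.exp (∫ t in (0:ℝ)..x, wp t))
    (hym_neg : ∀ x : ℝ, x < 0 → ym x = Real.exp (∫ t in (0:ℝ)..x, wm t))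
    (hup_pos : ∀ x : ℝ, 0 < x → up x = wp x)
    (hup_neg : ∀ x : ℝ, x < 0 →
      up x = wm x - α * ((ym x) ^ 2)⁻¹ / (1 + α * ∫ s in x..(0:ℝ), ((ym s) ^ 2)⁻¹))
    (hum_neg : ∀ x : ℝ, x < 0 → um x = wm x)
    (hum_pos : ∀ x : ℝ, 0 < x →
      um x = wp x + α * ((yp x) ^ 2)⁻¹ / (1 + α * ∫ s in (0:ℝ)..x, ((yp s) ^ 2)⁻¹)) :
    (Integrable (fun x => (up x) ^ 2) ∧ IntegrableOn up (Set.Ioi 0))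
    ∧ (Integrable (fun x => (um x) ^ 2) ∧ IntegrableOn um (Set.Iio 0))
    ∧ ∃ v : ℝ → ℝ, Continuous v ∧ v 0 = α ∧ ∀ x : ℝ, x ≠ 0 → v x = um x - up x := by
  set w : ℝ → ℝ := (Iic 0).piecewise wm wp
  have hw_neg : EqOn w wm (Iio 0) := fun x hx => piecewise_eq_of_mem _ _ _ (mem_Iic.2 hx.le)
  have hw_pos : EqOn w wp (Ioi 0) := fun x hx => piecewise_eq_of_notMem _ _ _ (notMem_Iic.2 hx)
  have hw : Integrable w := integrable_of_integrableOn_Iio_of_integrableOn_Ioi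
    (hwm1.congr_fun hw_neg.symm measurableSet_Iio) (hwp1.congr_fun hw_pos.symm measurableSet_Ioi)
  have hρ_neg : EqOn (riccatiWeight w) (fun x => (ym x ^ 2)⁻¹) (Iio 0) :=
    riccatiWeight_eqOn_inv_sq
      (fun x hx => by rw [uIoo_of_ge (le_of_lt hx)]; exact Ioo_subset_Iio_self) hw_neg hym_neg
  have hρ_pos : EqOn (riccatiWeight w) (fun x => (yp x ^ 2)⁻¹) (Ioi 0) :=
    riccatiWeight_eqOn_inv_sq
      (fun x hx => by rw [uIoo_of_le (le_of_lt hx)]; exact Ioo_subset_Ioi_self) hw_pos hyp_pos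
  set v := riccatiGap α (riccatiWeight w) with hv_def
  have hv : ∀ x : ℝ, x ≠ 0 → v x = um x - up x := by
    intro x hx
    rcases hx.lt_or_gt with hx | hx
    · rw [hv_def, riccatiGap_of_neg (fun x => (riccatiWeight_pos x).le) hρ_neg hx, hum_neg x hx,
        hup_neg x hx]
      ring
    · rw [hv_def, riccatiGap_of_pos (fun x => (riccatiWeight_pos x).le) hρ_pos hx, hum_pos x hx,
        hup_pos x hx]
      ring
  have hv₂ : MemLp v 2 := memLp_riccatiGap_riccatiWeight hα hw
  have hup₂ : Integrable fun x => up x ^ 2 := integrable_of_integrableOn_Iio_of_integrableOn_Ioi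
    (integrableOn_sq_of_eqOn_add measurableSet_Iio hwm1 hwm2 hv₂.neg fun x hx =>
      (by linarith [hv x hx.ne, hum_neg x hx] : up x = wm x + -v x))
    (hwp2.congr_fun (fun x hx => by rw [hup_pos x hx]) measurableSet_Ioi)
  have hum₂ : Integrable fun x => um x ^ 2 := integrable_of_integrableOn_Iio_of_integrableOn_Ioi
    (hwm2.congr_fun (fun x hx => by rw [hum_neg x hx]) measurableSet_Iio)
    (integrableOn_sq_of_eqOn_add measurableSet_Ioi hwp1 hwp2 hv₂ fun x hx =>
      (by linarith [hv x hx.ne', hup_pos x hx] : um x = wp x + v x))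
  exact ⟨⟨hup₂, hwp1.congr_fun (fun x hx => (hup_pos x hx).symm) measurableSet_Ioi⟩,
    ⟨hum₂, hwm1.congr_fun (fun x hx => (hum_neg x hx).symm) measurableSet_Iio⟩,
    v, continuous_riccatiGap hα (continuous_riccatiWeight hw),
    by simp [v, riccatiGap_zero, riccatiWeight], hv⟩

/-- Construction of extremal Riccati representatives from data `(w₊, w₋, α)`:
`u₊ ∈ L²(ℝ) ∩ L¹(ℝ⁺)`, `u₋ ∈ L²(ℝ) ∩ L¹(ℝ⁻)`, and `v = u₋ - u₊` extends to a
continuous function with `v(0) = α`. -/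
theorem stmt_8 (wp wm : ℝ → ℝ) (α : ℝ) (hα : 0 ≤ α)
    (hwp1 : IntegrableOn wp (Set.Ioi 0))
    (hwp2 : IntegrableOn (fun x => (wp x) ^ 2) (Set.Ioi 0))
    (hwm1 : IntegrableOn wm (Set.Iio 0))
    (hwm2 : IntegrableOn (fun x => (wm x) ^ 2) (Set.Iio 0))
    (yp ym up um : ℝ → ℝ)
    (hyp_pos : ∀ x : ℝ, 0 < x → yp x = Real.exp (∫ t in (0:ℝ)..x, wp t))
    (hym_neg : ∀ x : ℝ, x < 0 → ym x = Real.exp (∫ t in (0:ℝ)..x, wm t))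
    (hyp_neg : ∀ x : ℝ, x < 0 →
      yp x = ym x * (1 + α * ∫ s in x..(0:ℝ), ((ym s) ^ 2)⁻¹))
    (hym_pos : ∀ x : ℝ, 0 < x →
      ym x = yp x * (1 + α * ∫ s in (0:ℝ)..x, ((yp s) ^ 2)⁻¹))
    (hup_pos : ∀ x : ℝ, 0 < x → up x = wp x)
    (hup_neg : ∀ x : ℝ, x < 0 →
      up x = wm x - α * ((ym x) ^ 2)⁻¹ / (1 + α * ∫ s in x..(0:ℝ), ((ym s) ^ 2)⁻¹))
    (hum_neg : ∀ x : ℝ, x < 0 → um x = wm x)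
    (hum_pos : ∀ x : ℝ, 0 < x →
      um x = wp x + α * ((yp x) ^ 2)⁻¹ / (1 + α * ∫ s in (0:ℝ)..x, ((yp s) ^ 2)⁻¹)) :
    (Integrable (fun x => (up x) ^ 2) ∧ IntegrableOn up (Set.Ioi 0))
    ∧ (Integrable (fun x => (um x) ^ 2) ∧ IntegrableOn um (Set.Iio 0))
    ∧ ∃ v : ℝ → ℝ, Continuous v ∧ v 0 = α ∧ ∀ x : ℝ, x ≠ 0 → v x = um x - up x :=
  stmt_8_general wp wm α hα hwp1 hwp2 hwm1 hwm2 yp ym up um hyp_pos hym_neg hup_pos hup_neg hum_neg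
    hum_pos
end

section
/- With the setup of the previous construction (y_± built from w_±, α), the distributions q_± := u_±' + u_±² coincide in H⁻¹(ℝ): their difference is a multiple β·δ₀ of the Dirac delta with β = 0. -/
open MeasureTheory Set Filter intervalIntegral Topology

noncomputable section Stmt9

/-- primitive of `w` based at `0` -/
def prim (w : ℝ → ℝ) (x : ℝ) : ℝ := ∫ t in (0:ℝ)..x, w t

def Ef (w : ℝ → ℝ) (x : ℝ) : ℝ := Real.exp (-2 * prim w x)

def hf (w : ℝ → ℝ) (α : ℝ) (x : ℝ) : ℝ := 1 + α * ∫ t in (0:ℝ)..x, Ef w t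

def vf (w : ℝ → ℝ) (α : ℝ) (x : ℝ) : ℝ := α * Ef w x / hf w α x

lemma setInt_abs_le {w : ℝ → ℝ} (hw : Integrable w) (s : Set ℝ) :
    ∫ t in s, |w t| ≤ ∫ t, |w t| :=
  setIntegral_le_integral hw.abs (ae_of_all _ fun t => abs_nonneg _)

lemma abs_intervalIntegral_le {w : ℝ → ℝ} (hw : Integrable w) (x : ℝ) :
    |∫ t in (0:ℝ)..x, w t| ≤ ∫ t, |w t| := by
  have h1 : ‖∫ t in (0:ℝ)..x, w t‖ ≤ |∫ t in (0:ℝ)..x, abs (w t)| := by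
    simpa [Real.norm_eq_abs] using
      intervalIntegral.norm_integral_le_abs_integral_norm (f := w) (a := (0:ℝ)) (b := x)
        (μ := volume)
  rw [Real.norm_eq_abs] at h1
  refine h1.trans ?_
  have habs : (fun t => abs (w t)) = fun t => |w t| := rfl
  rcases le_total (0:ℝ) x with hx | hx
  · rw [intervalIntegral.integral_of_le hx, abs_of_nonneg
      (setIntegral_nonneg measurableSet_Ioc fun t _ => abs_nonneg _)]
    exact setInt_abs_le hw _
  · rw [intervalIntegral.integral_symm, abs_neg, intervalIntegral.integral_of_le hx,
      abs_of_nonneg (setIntegral_nonneg measurableSet_Ioc fun t _ => abs_nonneg _)]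
    exact setInt_abs_le hw _

lemma abs_prim_le {w : ℝ → ℝ} (hw : Integrable w) (x : ℝ) :
    |prim w x| ≤ ∫ t, |w t| := abs_intervalIntegral_le hw x

lemma prim_continuous {w : ℝ → ℝ} (hw : Integrable w) : Continuous (prim w) :=
  intervalIntegral.continuous_primitive (fun _ _ => hw.intervalIntegrable) 0

lemma Ef_continuous {w : ℝ → ℝ} (hw : Integrable w) : Continuous (Ef w) :=
  Real.continuous_exp.comp ((continuous_const).mul (prim_continuous hw))

lemma Ef_pos (w : ℝ → ℝ) (x : ℝ) : 0 < Ef w x := Real.exp_pos _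

lemma Ef_le {w : ℝ → ℝ} (hw : Integrable w) (x : ℝ) :
    Ef w x ≤ Real.exp (2 * ∫ t, |w t|) := by
  apply Real.exp_le_exp.2
  have := abs_prim_le hw x
  have h2 := (abs_le.1 this).1
  nlinarith [this, (abs_le.1 this).1]

lemma hf_hasDerivAt {w : ℝ → ℝ} (hw : Integrable w) (α : ℝ) (x : ℝ) :
    HasDerivAt (hf w α) (α * Ef w x) x := by
  have h := ((Ef_continuous hw).integral_hasStrictDerivAt 0 x).hasDerivAt
  exact (h.const_mul α).const_add 1

lemma hf_continuous {w : ℝ → ℝ} (hw : Integrable w) (α : ℝ) : Continuous (hf w α) := by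
  have : ∀ x, HasDerivAt (hf w α) (α * Ef w x) x := hf_hasDerivAt hw α
  exact continuous_iff_continuousAt.2 fun x => (this x).continuousAt

lemma hf_one_le {w : ℝ → ℝ} (hw : Integrable w) {α : ℝ} (hα : 0 ≤ α) {x : ℝ} (hx : 0 ≤ x) :
    1 ≤ hf w α x := by
  have h : 0 ≤ ∫ t in (0:ℝ)..x, Ef w t :=
    intervalIntegral.integral_nonneg hx fun t _ => (Ef_pos w t).le
  have : 0 ≤ α * ∫ t in (0:ℝ)..x, Ef w t := mul_nonneg hα h
  simp [hf]; linarith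

lemma vf_nonneg {w : ℝ → ℝ} (hw : Integrable w) {α : ℝ} (hα : 0 ≤ α) {x : ℝ} (hx : 0 ≤ x) :
    0 ≤ vf w α x :=
  div_nonneg (mul_nonneg hα (Ef_pos w x).le) (by linarith [hf_one_le hw hα hx])

lemma vf_le {w : ℝ → ℝ} (hw : Integrable w) {α : ℝ} (hα : 0 ≤ α) {x : ℝ} (hx : 0 ≤ x) :
    vf w α x ≤ α * Real.exp (2 * ∫ t, |w t|) := by
  have h1 : 1 ≤ hf w α x := hf_one_le hw hα hx
  have h2 : vf w α x ≤ α * Ef w x :=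
    div_le_self (mul_nonneg hα (Ef_pos w x).le) h1
  exact h2.trans (mul_le_mul_of_nonneg_left (Ef_le hw x) hα)

lemma vf_measurable (w : ℝ → ℝ) (hw : Integrable w) (α : ℝ) : Measurable (vf w α) :=
  (((Ef_continuous hw).measurable).const_mul α).div (hf_continuous hw α).measurable

lemma prim_zero (w : ℝ → ℝ) : prim w 0 = 0 := intervalIntegral.integral_same
lemma Ef_zero (w : ℝ → ℝ) : Ef w 0 = 1 := by simp [Ef, prim_zero]
lemma hf_zero (w : ℝ → ℝ) (α : ℝ) : hf w α 0 = 1 := by simp [hf]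
lemma vf_zero (w : ℝ → ℝ) (α : ℝ) : vf w α 0 = α := by simp [vf, Ef_zero, hf_zero]



lemma prim_hasDerivAt {w : ℝ → ℝ} (hw : Continuous w) (x : ℝ) :
    HasDerivAt (prim w) (w x) x :=
  (hw.integral_hasStrictDerivAt 0 x).hasDerivAt

lemma Ef_hasDerivAt {w : ℝ → ℝ} (hw : Continuous w) (x : ℝ) :
    HasDerivAt (Ef w) (-2 * w x * Ef w x) x := by
  have h1 : HasDerivAt (fun y => -2 * prim w y) (-2 * w x) x :=
    (prim_hasDerivAt hw x).const_mul (-2)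
  have h2 := h1.exp
  have : -2 * w x * Ef w x = Real.exp (-2 * prim w x) * (-2 * w x) := by
    simp [Ef]; ring
  rw [this]
  exact h2

lemma Ef_cont {w : ℝ → ℝ} (hw : Continuous w) : Continuous (Ef w) := by
  exact continuous_iff_continuousAt.2 fun x => (Ef_hasDerivAt hw x).continuousAt

lemma hf_hasDerivAt' {w : ℝ → ℝ} (hw : Continuous w) (α : ℝ) (x : ℝ) :
    HasDerivAt (hf w α) (α * Ef w x) x := by
  have h := ((Ef_cont hw).integral_hasStrictDerivAt 0 x).hasDerivAt
  exact (h.const_mul α).const_add 1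

lemma vf_hasDerivAt {w : ℝ → ℝ} (hw : Continuous w) {α : ℝ} {x : ℝ}
    (hx : hf w α x ≠ 0) :
    HasDerivAt (vf w α) (-(2 * w x * vf w α x + vf w α x ^ 2)) x := by
  have hE := Ef_hasDerivAt hw x
  have hh := hf_hasDerivAt' hw α x
  have h := ((hE.const_mul α).div hh hx)
  have : HasDerivAt (vf w α)
      ((α * (-2 * w x * Ef w x) * hf w α x - α * Ef w x * (α * Ef w x)) / hf w α x ^ 2) x := by
    exact h
  convert this using 1
  unfold vf
  field_simp
  ring

lemma key_cont {w : ℝ → ℝ} (hw : Continuous w) {α : ℝ} (hα : 0 ≤ α) {x : ℝ} (hx : 0 ≤ x)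
    (hpos : ∀ t ∈ Set.uIcc (0:ℝ) x, 1 ≤ hf w α t) :
    vf w α x = α - ∫ t in (0:ℝ)..x, (2 * w t * vf w α t + vf w α t ^ 2) := by
  have hd : ∀ t ∈ Set.uIcc (0:ℝ) x,
      HasDerivAt (vf w α) (-(2 * w t * vf w α t + vf w α t ^ 2)) t := fun t ht =>
    vf_hasDerivAt hw (by linarith [hpos t ht])
  have hvc : ContinuousOn (vf w α) (Set.uIcc (0:ℝ) x) := fun t ht =>
    ((hd t ht).continuousAt).continuousWithinAt
  have hint : IntervalIntegrable (fun t => -(2 * w t * vf w α t + vf w α t ^ 2)) volume 0 x := by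
    apply ContinuousOn.intervalIntegrable
    exact (((continuous_const.mul hw).continuousOn.mul hvc).add (hvc.pow 2)).neg
  have := intervalIntegral.integral_eq_sub_of_hasDerivAt hd hint
  rw [intervalIntegral.integral_neg] at this
  have hv0 : vf w α 0 = α := by simp [vf, Ef, prim, hf]
  rw [hv0] at this
  linarith [this]



lemma helper_bdd {f c : ℝ → ℝ} {s : Set ℝ} (hs : MeasurableSet s)
    (hf : IntegrableOn f s) (hc : AEStronglyMeasurable c (volume.restrict s))
    {C : ℝ} (hC : ∀ t ∈ s, |c t| ≤ C) :
    IntegrableOn (fun t => c t * f t) s := by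
  refine Integrable.mono' (hf.abs.const_mul C) (hc.mul hf.1) ?_
  refine (ae_restrict_iff' hs).2 (ae_of_all _ fun t ht => ?_)
  rw [Real.norm_eq_abs, abs_mul]
  exact mul_le_mul_of_nonneg_right (hC t ht) (abs_nonneg _)

lemma helper_bdd_const {c : ℝ → ℝ} {s : Set ℝ} (hs : MeasurableSet s) (hsf : volume s < ⊤)
    (hc : AEStronglyMeasurable c (volume.restrict s))
    {C : ℝ} (hC : ∀ t ∈ s, |c t| ≤ C) :
    IntegrableOn c s := by
  refine Integrable.mono'
    (integrableOn_const hsf.ne : IntegrableOn (fun _ => C) s volume) hc ?_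
  exact (ae_restrict_iff' hs).2 (ae_of_all _ fun t ht => by
    rw [Real.norm_eq_abs]; exact hC t ht)

lemma key {w : ℝ → ℝ} (hw : Integrable w) {α : ℝ} (hα : 0 ≤ α) {x : ℝ} (hx : 0 ≤ x) :
    vf w α x = α - ∫ t in (0:ℝ)..x, (2 * w t * vf w α t + vf w α t ^ 2) := by
  have hch : ∀ n : ℕ, ∃ g : ℝ → ℝ, HasCompactSupport g ∧ (∫ t, ‖w t - g t‖) ≤ 1/((n:ℝ)+1) ∧
      Continuous g ∧ Integrable g :=
    fun n => hw.exists_hasCompactSupport_integral_sub_le (by positivity)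
  choose g hgc hgd hgcont hgint using hch
  set δ : ℕ → ℝ := fun n => ∫ t, |w t - g n t| with hδdef
  have hδnn : ∀ n, 0 ≤ δ n := fun n => integral_nonneg fun t => abs_nonneg _
  have hδle : ∀ n, δ n ≤ 1/((n:ℝ)+1) := fun n => by
    simpa [hδdef, Real.norm_eq_abs] using hgd n
  have hδ0 : Tendsto δ atTop (𝓝 0) :=
    squeeze_zero hδnn hδle tendsto_one_div_add_atTop_nhds_zero_nat
  have hsub : ∀ n, Integrable (fun t => w t - g n t) := fun n => hw.sub (hgint n)
  have hpd : ∀ n t, |prim (g n) t - prim w t| ≤ δ n := by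
    intro n t
    have h1 : prim (g n) t - prim w t = -∫ s in (0:ℝ)..t, (w s - g n s) := by
      rw [intervalIntegral.integral_sub hw.intervalIntegrable (hgint n).intervalIntegrable]
      simp [prim]
    rw [h1, abs_neg]
    exact abs_intervalIntegral_le (hsub n) t
  set Mw := ∫ t, |w t| with hMw
  have hδ1 : ∀ n, δ n ≤ 1 := by
    intro n
    refine (hδle n).trans ?_
    rw [div_le_one (by positivity)]
    linarith [Nat.cast_nonneg (α := ℝ) n]
  have hpb : ∀ n t, |prim (g n) t| ≤ Mw + 1 := by
    intro n t
    have h2 := abs_prim_le hw t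
    have h3 := hpd n t
    have h4 := hδ1 n
    calc |prim (g n) t| = |prim w t + (prim (g n) t - prim w t)| := by ring_nf
      _ ≤ |prim w t| + |prim (g n) t - prim w t| := abs_add_le _ _
      _ ≤ Mw + 1 := by linarith
  set CE := Real.exp (2*Mw + 2) with hCE
  have hEb : ∀ n t, Ef (g n) t ≤ CE := by
    intro n t
    apply Real.exp_le_exp.2
    have h5 := (abs_le.1 (hpb n t)).1
    nlinarith
  set B := α * CE with hB
  have hfge : ∀ n t, 0 ≤ t → 1 ≤ hf (g n) α t := fun n t ht => hf_one_le (hgint n) hα ht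
  have hvnn : ∀ n t, 0 ≤ t → 0 ≤ vf (g n) α t := fun n t ht => vf_nonneg (hgint n) hα ht
  have hvb : ∀ n t, 0 ≤ t → vf (g n) α t ≤ B := by
    intro n t ht
    have h1 : vf (g n) α t ≤ α * Ef (g n) t :=
      div_le_self (mul_nonneg hα (Ef_pos _ t).le) (hfge n t ht)
    exact h1.trans (mul_le_mul_of_nonneg_left (hEb n t) hα)
  have hBnn : 0 ≤ B := mul_nonneg hα (Real.exp_pos _).le
  -- pointwise convergences
  have hptend : ∀ t, Tendsto (fun n => prim (g n) t) atTop (𝓝 (prim w t)) := by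
    intro t
    have h0 : Tendsto (fun n => prim (g n) t - prim w t) atTop (𝓝 0) :=
      squeeze_zero_norm (fun n => by simpa [Real.norm_eq_abs] using hpd n t) hδ0
    simpa using h0.add_const (prim w t)
  have hEtend : ∀ t, Tendsto (fun n => Ef (g n) t) atTop (𝓝 (Ef w t)) := by
    intro t
    have h1 : Tendsto (fun n => -2 * prim (g n) t) atTop (𝓝 (-2 * prim w t)) :=
      (hptend t).const_mul (-2)
    exact (Real.continuous_exp.tendsto _).comp h1
  have hhtend : ∀ t, 0 ≤ t → Tendsto (fun n => hf (g n) α t) atTop (𝓝 (hf w α t)) := by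
    intro t ht
    have hint : Tendsto (fun n => ∫ s in Ioc (0:ℝ) t, Ef (g n) s) atTop
        (𝓝 (∫ s in Ioc (0:ℝ) t, Ef w s)) := by
      apply tendsto_integral_of_dominated_convergence (fun _ => CE)
      · exact fun n => (Ef_cont (hgcont n)).aestronglyMeasurable.restrict
      · exact integrableOn_const measure_Ioc_lt_top.ne
      · exact fun n => ae_of_all _ fun s => by
          rw [Real.norm_eq_abs, abs_of_pos (Ef_pos _ s)]; exact hEb n s
      · exact ae_of_all _ fun s => hEtend s
    have heq : ∀ n, hf (g n) α t = 1 + α * ∫ s in Ioc (0:ℝ) t, Ef (g n) s := fun n => by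
      rw [hf, intervalIntegral.integral_of_le ht]
    have heqw : hf w α t = 1 + α * ∫ s in Ioc (0:ℝ) t, Ef w s := by
      rw [hf, intervalIntegral.integral_of_le ht]
    rw [heqw]
    simp_rw [heq]
    exact (hint.const_mul α).const_add 1
  have hvtend : ∀ t, 0 ≤ t → Tendsto (fun n => vf (g n) α t) atTop (𝓝 (vf w α t)) := by
    intro t ht
    have h1 : hf w α t ≠ 0 := by linarith [hf_one_le hw hα ht]
    have := Filter.Tendsto.div ((hEtend t).const_mul α) (hhtend t ht) h1
    exact this
  -- identity for approximants
  have hkeyn : ∀ n, vf (g n) α x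
      = α - ∫ t in Ioc (0:ℝ) x, (2 * g n t * vf (g n) α t + vf (g n) α t ^ 2) := by
    intro n
    have h := key_cont (hgcont n) hα hx (fun t ht => hfge n t (by
      rw [Set.uIcc_of_le hx] at ht; exact ht.1))
    rwa [intervalIntegral.integral_of_le hx] at h
  -- integrability pieces
  have hvmeas : ∀ n, Measurable (vf (g n) α) := fun n => vf_measurable _ (hgint n) α
  have hT1int : ∀ n, IntegrableOn (fun t => (2 * vf (g n) α t) * (g n t - w t)) (Ioc 0 x) := by
    intro n
    refine helper_bdd measurableSet_Ioc ((hsub n).neg.congr ?_).integrableOn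
      ((hvmeas n).const_mul 2).aestronglyMeasurable.restrict (C := 2 * B) ?_
    · exact ae_of_all _ fun t => by simp [Pi.neg_apply]
    · intro t ht
      rw [abs_mul, abs_of_nonneg (by norm_num : (0:ℝ) ≤ 2), abs_of_nonneg (hvnn n t ht.1.le)]
      have := hvb n t ht.1.le
      nlinarith
  have hT2int : ∀ n, IntegrableOn (fun t => 2 * w t * vf (g n) α t + vf (g n) α t ^ 2)
      (Ioc 0 x) := by
    intro n
    have h1 : IntegrableOn (fun t => (2 * vf (g n) α t) * w t) (Ioc 0 x) := by
      refine helper_bdd measurableSet_Ioc hw.integrableOn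
        ((hvmeas n).const_mul 2).aestronglyMeasurable.restrict (C := 2 * B) ?_
      intro t ht
      rw [abs_mul, abs_of_nonneg (by norm_num : (0:ℝ) ≤ 2), abs_of_nonneg (hvnn n t ht.1.le)]
      have := hvb n t ht.1.le
      nlinarith
    have h2 : IntegrableOn (fun t => vf (g n) α t ^ 2) (Ioc 0 x) := by
      refine helper_bdd_const measurableSet_Ioc measure_Ioc_lt_top
        ((hvmeas n).pow_const 2).aestronglyMeasurable.restrict (C := B ^ 2) ?_
      intro t ht
      rw [abs_of_nonneg (sq_nonneg _)]
      have h3 := hvnn n t ht.1.le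
      have h4 := hvb n t ht.1.le
      nlinarith
    exact MeasureTheory.IntegrableOn.congr_fun (h1.add h2)
      (fun t _ => by simp [Pi.add_apply]; ring) measurableSet_Ioc
  have hwvint : IntegrableOn (fun t => 2 * w t * vf w α t + vf w α t ^ 2) (Ioc 0 x) := by
    have hvwnn : ∀ t, 0 ≤ t → 0 ≤ vf w α t := fun t ht => vf_nonneg hw hα ht
    have hvwb : ∀ t, 0 ≤ t → vf w α t ≤ α * Real.exp (2 * Mw) := fun t ht => vf_le hw hα ht
    have h1 : IntegrableOn (fun t => (2 * vf w α t) * w t) (Ioc 0 x) := by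
      refine helper_bdd measurableSet_Ioc hw.integrableOn
        ((vf_measurable _ hw α).const_mul 2).aestronglyMeasurable.restrict
        (C := 2 * (α * Real.exp (2 * Mw))) ?_
      intro t ht
      rw [abs_mul, abs_of_nonneg (by norm_num : (0:ℝ) ≤ 2), abs_of_nonneg (hvwnn t ht.1.le)]
      have := hvwb t ht.1.le
      nlinarith
    have h2 : IntegrableOn (fun t => vf w α t ^ 2) (Ioc 0 x) := by
      refine helper_bdd_const measurableSet_Ioc measure_Ioc_lt_top
        ((vf_measurable _ hw α).pow_const 2).aestronglyMeasurable.restrict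
        (C := (α * Real.exp (2 * Mw)) ^ 2) ?_
      intro t ht
      rw [abs_of_nonneg (sq_nonneg _)]
      have h3 := hvwnn t ht.1.le
      have h4 := hvwb t ht.1.le
      nlinarith
    exact MeasureTheory.IntegrableOn.congr_fun (h1.add h2)
      (fun t _ => by simp [Pi.add_apply]; ring) measurableSet_Ioc
  -- split the integral
  have hsplit : ∀ n, ∫ t in Ioc (0:ℝ) x, (2 * g n t * vf (g n) α t + vf (g n) α t ^ 2)
      = (∫ t in Ioc (0:ℝ) x, (2 * vf (g n) α t) * (g n t - w t))
        + ∫ t in Ioc (0:ℝ) x, (2 * w t * vf (g n) α t + vf (g n) α t ^ 2) := by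
    intro n
    rw [← integral_add (hT1int n) (hT2int n)]
    exact setIntegral_congr_fun measurableSet_Ioc fun t _ => by ring
  -- first piece tends to 0
  have hAtend : Tendsto (fun n => ∫ t in Ioc (0:ℝ) x, (2 * vf (g n) α t) * (g n t - w t))
      atTop (𝓝 0) := by
    have hbound : ∀ n, ‖∫ t in Ioc (0:ℝ) x, (2 * vf (g n) α t) * (g n t - w t)‖
        ≤ (2 * B) * δ n := by
      intro n
      refine (MeasureTheory.norm_integral_le_integral_norm _).trans ?_
      have h1 : ∫ t in Ioc (0:ℝ) x, ‖(2 * vf (g n) α t) * (g n t - w t)‖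
          ≤ ∫ t in Ioc (0:ℝ) x, (2 * B) * |w t - g n t| := by
        refine setIntegral_mono_on ((hT1int n).norm) (((hsub n).abs.const_mul _).integrableOn)
          measurableSet_Ioc ?_
        intro t ht
        rw [Real.norm_eq_abs, abs_mul, abs_sub_comm]
        refine mul_le_mul_of_nonneg_right ?_ (abs_nonneg _)
        rw [abs_of_nonneg (by linarith [hvnn n t ht.1.le] : (0:ℝ) ≤ 2 * vf (g n) α t)]
        linarith [hvb n t ht.1.le]
      refine h1.trans ?_
      rw [MeasureTheory.integral_const_mul]
      refine mul_le_mul_of_nonneg_left ?_ (by positivity)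
      exact setInt_abs_le (hsub n) _
    have h2 : Tendsto (fun n => (2 * B) * δ n) atTop (𝓝 0) := by
      simpa using hδ0.const_mul (2 * B)
    exact squeeze_zero_norm hbound h2
  -- second piece tends to the limit integral
  have hBtend : Tendsto (fun n => ∫ t in Ioc (0:ℝ) x, (2 * w t * vf (g n) α t + vf (g n) α t ^ 2))
      atTop (𝓝 (∫ t in Ioc (0:ℝ) x, (2 * w t * vf w α t + vf w α t ^ 2))) := by
    apply tendsto_integral_of_dominated_convergence (fun t => (2 * B) * |w t| + B ^ 2)
    · exact fun n => (hT2int n).1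
    · refine Integrable.add ?_ (integrableOn_const measure_Ioc_lt_top.ne)
      exact (hw.abs.const_mul (2 * B)).integrableOn
    · intro n
      refine (ae_restrict_iff' measurableSet_Ioc).2 (ae_of_all _ fun t ht => ?_)
      have h3 := hvnn n t ht.1.le
      have h4 := hvb n t ht.1.le
      have h5 : |2 * w t * vf (g n) α t + vf (g n) α t ^ 2|
          ≤ 2 * |w t| * vf (g n) α t + vf (g n) α t ^ 2 := by
        have ha : |2 * w t * vf (g n) α t| = 2 * |w t| * vf (g n) α t := by
          rw [abs_mul, abs_mul, abs_of_nonneg (by norm_num : (0:ℝ) ≤ 2), abs_of_nonneg h3]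
        calc |2 * w t * vf (g n) α t + vf (g n) α t ^ 2|
            ≤ |2 * w t * vf (g n) α t| + |vf (g n) α t ^ 2| := abs_add_le _ _
          _ = 2 * |w t| * vf (g n) α t + vf (g n) α t ^ 2 := by
              rw [ha, abs_of_nonneg (sq_nonneg (vf (g n) α t))]
      rw [Real.norm_eq_abs]
      refine h5.trans ?_
      have h6 : (0:ℝ) ≤ |w t| := abs_nonneg _
      nlinarith
    · refine (ae_restrict_iff' measurableSet_Ioc).2 (ae_of_all _ fun t ht => ?_)
      exact ((hvtend t ht.1.le).const_mul (2 * w t)).add ((hvtend t ht.1.le).pow 2)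
  -- put it together
  have hLHS : Tendsto (fun n => vf (g n) α x) atTop (𝓝 (vf w α x)) := hvtend x hx
  have hRHS : Tendsto (fun n => vf (g n) α x) atTop
      (𝓝 (α - ∫ t in Ioc (0:ℝ) x, (2 * w t * vf w α t + vf w α t ^ 2))) := by
    have h7 : Tendsto (fun n => α - ((∫ t in Ioc (0:ℝ) x, (2 * vf (g n) α t) * (g n t - w t))
        + ∫ t in Ioc (0:ℝ) x, (2 * w t * vf (g n) α t + vf (g n) α t ^ 2))) atTop
        (𝓝 (α - (0 + ∫ t in Ioc (0:ℝ) x, (2 * w t * vf w α t + vf w α t ^ 2)))) :=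
      (tendsto_const_nhds.sub (hAtend.add hBtend))
    rw [zero_add] at h7
    refine h7.congr fun n => ?_
    rw [← hsplit n, ← hkeyn n]
  have := tendsto_nhds_unique hLHS hRHS
  rw [this, intervalIntegral.integral_of_le hx]

lemma fubini_tri {g f : ℝ → ℝ} {T : ℝ} (hg : IntegrableOn g (Ioc 0 T))
    (hf : Continuous f) :
    ∫ x in Ioc (0:ℝ) T, (∫ t in Ioc (0:ℝ) x, g t) * f x
      = ∫ t in Ioc (0:ℝ) T, g t * ∫ x in Ioc t T, f x := by
  set μ := volume.restrict (Ioc (0:ℝ) T) with hμ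
  set S : Set (ℝ × ℝ) := {p | p.2 ∈ Ioc 0 p.1} with hS
  have hSm : MeasurableSet S := by
    have h1 : MeasurableSet {p : ℝ × ℝ | 0 < p.2} :=
      measurableSet_lt measurable_const measurable_snd
    have h2 : MeasurableSet {p : ℝ × ℝ | p.2 ≤ p.1} :=
      measurableSet_le measurable_snd measurable_fst
    have hEq : S = {p : ℝ × ℝ | 0 < p.2} ∩ {p : ℝ × ℝ | p.2 ≤ p.1} := by
      ext p; simp [hS, Set.mem_Ioc, and_comm]
    rw [hEq]; exact h1.inter h2
  set F : ℝ → ℝ → ℝ := fun x t => S.indicator (fun q => g q.2) (x, t) * f x with hF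
  have hfint : IntegrableOn f (Ioc 0 T) := hf.integrableOn_Ioc
  have hFint : Integrable (Function.uncurry F) (μ.prod μ) := by
    have hmeas : AEStronglyMeasurable (Function.uncurry F) (μ.prod μ) := by
      have h1 : AEStronglyMeasurable (fun p : ℝ × ℝ => g p.2) (μ.prod μ) := hg.1.comp_snd
      have h2 : AEStronglyMeasurable (fun p : ℝ × ℝ => f p.1) (μ.prod μ) :=
        (hf.comp continuous_fst).aestronglyMeasurable
      exact (h1.indicator hSm).mul h2
    refine Integrable.mono' (Integrable.mul_prod hfint.abs hg.abs) hmeas (ae_of_all _ ?_)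
    rintro ⟨x, t⟩
    simp only [Function.uncurry, hF, Real.norm_eq_abs, abs_mul]
    by_cases hmem : (x, t) ∈ S
    · rw [Set.indicator_of_mem hmem]
      exact le_of_eq (mul_comm _ _)
    · rw [Set.indicator_of_notMem hmem, abs_zero, zero_mul]
      positivity
  have hswap : (∫ x, (∫ t, F x t ∂μ) ∂μ) = ∫ t, (∫ x, F x t ∂μ) ∂μ :=
    integral_integral_swap hFint
  have hLHS : ∫ x in Ioc (0:ℝ) T, (∫ t in Ioc (0:ℝ) x, g t) * f x
      = ∫ x, (∫ t, F x t ∂μ) ∂μ := by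
    refine setIntegral_congr_fun measurableSet_Ioc fun x hx => ?_
    have h1 : (fun t => F x t) = fun t => (Ioc (0:ℝ) x).indicator g t * f x := by
      funext t
      simp only [hF]
      congr 1
    rw [h1, MeasureTheory.integral_mul_const, MeasureTheory.integral_indicator measurableSet_Ioc, hμ,
      Measure.restrict_restrict measurableSet_Ioc, Set.Ioc_inter_Ioc, max_self,
      min_eq_left hx.2]
  have hRHS : ∫ t, (∫ x, F x t ∂μ) ∂μ
      = ∫ t in Ioc (0:ℝ) T, g t * ∫ x in Ioc t T, f x := by
    refine setIntegral_congr_fun measurableSet_Ioc fun t ht => ?_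
    have h1 : (fun x => F x t) = fun x => (Ici t).indicator (fun x => g t * f x) x := by
      funext x
      simp only [hF]
      by_cases hmem : t ≤ x
      · rw [Set.indicator_of_mem (by exact hmem : x ∈ Ici t),
          Set.indicator_of_mem (by exact ⟨ht.1, hmem⟩ : (x, t) ∈ S)]
      · rw [Set.indicator_of_notMem (by exact hmem : x ∉ Ici t),
          Set.indicator_of_notMem (by exact fun hc => hmem hc.2 : (x, t) ∉ S), zero_mul]
    have h2 : Ici t ∩ Ioc 0 T = Icc t T := by
      ext y
      simp only [Set.mem_inter_iff, Set.mem_Ici, Set.mem_Ioc, Set.mem_Icc]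
      constructor
      · rintro ⟨hy1, _, hy3⟩; exact ⟨hy1, hy3⟩
      · rintro ⟨hy1, hy2⟩; exact ⟨hy1, lt_of_lt_of_le ht.1 hy1, hy2⟩
    rw [h1, MeasureTheory.integral_indicator measurableSet_Ici, hμ,
      Measure.restrict_restrict measurableSet_Ici, h2, integral_Icc_eq_integral_Ioc,
      MeasureTheory.integral_const_mul]
  rw [hLHS, hswap, hRHS]

lemma g2int {w : ℝ → ℝ} (hw : Integrable w) {α : ℝ} (hα : 0 ≤ α) (x : ℝ) :
    IntegrableOn (fun t => 2 * w t * vf w α t + vf w α t ^ 2) (Ioc 0 x) := by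
  set Mw := ∫ t, |w t| with hMw
  have hvwnn : ∀ t, 0 ≤ t → 0 ≤ vf w α t := fun t ht => vf_nonneg hw hα ht
  have hvwb : ∀ t, 0 ≤ t → vf w α t ≤ α * Real.exp (2 * Mw) := fun t ht => vf_le hw hα ht
  have h1 : IntegrableOn (fun t => (2 * vf w α t) * w t) (Ioc 0 x) := by
    refine helper_bdd measurableSet_Ioc hw.integrableOn
      ((vf_measurable _ hw α).const_mul 2).aestronglyMeasurable.restrict
      (C := 2 * (α * Real.exp (2 * Mw))) ?_
    intro t ht
    rw [abs_mul, abs_of_nonneg (by norm_num : (0:ℝ) ≤ 2), abs_of_nonneg (hvwnn t ht.1.le)]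
    have := hvwb t ht.1.le
    nlinarith
  have h2 : IntegrableOn (fun t => vf w α t ^ 2) (Ioc 0 x) := by
    refine helper_bdd_const measurableSet_Ioc measure_Ioc_lt_top
      ((vf_measurable _ hw α).pow_const 2).aestronglyMeasurable.restrict
      (C := (α * Real.exp (2 * Mw)) ^ 2) ?_
    intro t ht
    rw [abs_of_nonneg (sq_nonneg _)]
    have h3 := hvwnn t ht.1.le
    have h4 := hvwb t ht.1.le
    nlinarith
  exact MeasureTheory.IntegrableOn.congr_fun (h1.add h2)
    (fun t _ => by simp [Pi.add_apply]; ring) measurableSet_Ioc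

lemma mainplus {w : ℝ → ℝ} (hw : Integrable w) {α : ℝ} (hα : 0 ≤ α) {φ : ℝ → ℝ}
    (hφ : ContDiff ℝ (⊤ : ℕ∞) φ) (hφc : HasCompactSupport φ) :
    ∫ x in Ioi (0:ℝ), (-(vf w α x) * deriv φ x + vf w α x * (2 * w x + vf w α x) * φ x)
      = α * φ 0 := by
  classical
  -- a bound T beyond which φ and deriv φ vanish
  obtain ⟨r, hr⟩ := hφc.isBounded.subset_closedBall (0 : ℝ)
  set T : ℝ := max r 0 + 1 with hT
  have hT0 : 0 < T := by positivity
  have hnotin : ∀ x : ℝ, T ≤ x → x ∉ tsupport φ := by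
    intro x hx hmem
    have h0 := hr hmem
    rw [Real.closedBall_eq_Icc] at h0
    have h1 : r ≤ max r 0 := le_max_left _ _
    have h2 := h0.2
    have hTx : max r 0 + 1 ≤ x := hx
    linarith
  have hout : ∀ x, T ≤ x → φ x = 0 := fun x hx =>
    image_eq_zero_of_notMem_tsupport (hnotin x hx)
  have hdsupp : tsupport (deriv φ) ⊆ tsupport φ :=
    closure_minimal support_deriv_subset (isClosed_tsupport φ)
  have hdout : ∀ x, T ≤ x → deriv φ x = 0 := fun x hx =>
    image_eq_zero_of_notMem_tsupport (fun hmem => hnotin x hx (hdsupp hmem))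
  set v := vf w α with hv
  set g2 : ℝ → ℝ := fun t => 2 * w t * v t + v t ^ 2 with hg2
  have hφcont : Continuous φ := hφ.continuous
  have hdφ : Continuous (deriv φ) := hφ.continuous_deriv (by simp)
  set Mw := ∫ t, |w t| with hMw
  set B := α * Real.exp (2 * Mw) with hB
  have hvnn : ∀ t : ℝ, 0 ≤ t → 0 ≤ v t := fun t ht => vf_nonneg hw hα ht
  have hvb : ∀ t : ℝ, 0 ≤ t → v t ≤ B := fun t ht => vf_le hw hα ht
  have hvmeas : Measurable v := vf_measurable _ hw α
  have hg2i : IntegrableOn g2 (Ioc 0 T) := g2int hw hα T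
  have hint1 : IntegrableOn (fun x => v x * deriv φ x) (Ioc 0 T) := by
    refine helper_bdd measurableSet_Ioc hdφ.integrableOn_Ioc
      hvmeas.aestronglyMeasurable.restrict (C := B) ?_
    intro t ht; rw [abs_of_nonneg (hvnn t ht.1.le)]; exact hvb t ht.1.le
  have hint3 : IntegrableOn (fun x => g2 x * φ x) (Ioc 0 T) := by
    obtain ⟨Cφ, hCφ⟩ := hφc.exists_bound_of_continuous hφcont
    refine MeasureTheory.IntegrableOn.congr_fun
      (helper_bdd measurableSet_Ioc hg2i hφcont.aestronglyMeasurable.restrict (C := Cφ)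
        fun t _ => by simpa [Real.norm_eq_abs] using hCφ t)
      (fun t _ => mul_comm _ _) measurableSet_Ioc
  have hintgrand : IntegrableOn
      (fun x => -(v x) * deriv φ x + v x * (2 * w x + v x) * φ x) (Ioc 0 T) := by
    refine MeasureTheory.IntegrableOn.congr_fun (hint1.neg.add hint3)
      (fun t _ => ?_) measurableSet_Ioc
    simp only [Pi.add_apply, Pi.neg_apply, hg2]
    ring
  have hvanish : ∀ x : ℝ, x ∈ Ioi T →
      (-(v x) * deriv φ x + v x * (2 * w x + v x) * φ x) = 0 := by
    intro x hx
    rw [hout x (le_of_lt hx), hdout x (le_of_lt hx)]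
    ring
  have hsplitset : ∫ x in Ioi (0:ℝ), (-(v x) * deriv φ x + v x * (2 * w x + v x) * φ x)
      = ∫ x in Ioc (0:ℝ) T, (-(v x) * deriv φ x + v x * (2 * w x + v x) * φ x) := by
    rw [← Set.Ioc_union_Ioi_eq_Ioi hT0.le]
    rw [MeasureTheory.setIntegral_union (Set.Ioc_disjoint_Ioi le_rfl) measurableSet_Ioi
      hintgrand
      (MeasureTheory.IntegrableOn.congr_fun (integrableOn_zero)
        (fun x hx => (hvanish x hx).symm) measurableSet_Ioi)]
    have hzero : ∫ x in Ioi T, (-(v x) * deriv φ x + v x * (2 * w x + v x) * φ x) = 0 := by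
      calc ∫ x in Ioi T, (-(v x) * deriv φ x + v x * (2 * w x + v x) * φ x)
          = ∫ _x in Ioi T, (0:ℝ) :=
            setIntegral_congr_fun measurableSet_Ioi fun x hx => hvanish x hx
        _ = 0 := by simp
    rw [hzero, add_zero]
  have hkeyv : ∀ x ∈ Ioc (0:ℝ) T, v x = α - ∫ t in Ioc (0:ℝ) x, g2 t := by
    intro x hx
    have h := key hw hα hx.1.le
    rw [intervalIntegral.integral_of_le hx.1.le] at h
    exact h
  have hφdiff : ∀ x : ℝ, DifferentiableAt ℝ φ x := fun x =>
    (hφ.differentiable (by simp)).differentiableAt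
  have hftc : ∀ a b : ℝ, ∫ x in a..b, deriv φ x = φ b - φ a := fun a b =>
    intervalIntegral.integral_deriv_eq_sub (fun x _ => hφdiff x) (hdφ.intervalIntegrable a b)
  have hαdφ : IntegrableOn (fun x => α * deriv φ x) (Ioc 0 T) :=
    (continuous_const.mul hdφ : Continuous fun x => α * deriv φ x).integrableOn_Ioc
  have hGint : IntegrableOn (fun x => (∫ t in Ioc (0:ℝ) x, g2 t) * deriv φ x) (Ioc 0 T) := by
    refine MeasureTheory.IntegrableOn.congr_fun (hαdφ.sub hint1) (fun x hx => ?_)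
      measurableSet_Ioc
    have h1 := hkeyv x hx
    have h2 : (∫ t in Ioc (0:ℝ) x, g2 t) = α - v x := by rw [h1]; ring
    simp only [Pi.sub_apply, h2]
    ring
  have hsub1 : ∫ x in Ioc (0:ℝ) T, v x * deriv φ x
      = α * (φ T - φ 0) - ∫ x in Ioc (0:ℝ) T, (∫ t in Ioc (0:ℝ) x, g2 t) * deriv φ x := by
    have h1 : ∫ x in Ioc (0:ℝ) T, v x * deriv φ x
        = ∫ x in Ioc (0:ℝ) T,
            (α * deriv φ x - (∫ t in Ioc (0:ℝ) x, g2 t) * deriv φ x) := by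
      refine setIntegral_congr_fun measurableSet_Ioc fun x hx => ?_
      rw [hkeyv x hx]
      ring
    rw [h1, integral_sub hαdφ hGint,
      MeasureTheory.integral_const_mul]
    congr 1
    rw [← intervalIntegral.integral_of_le hT0.le, hftc 0 T]
  have hfub : ∫ x in Ioc (0:ℝ) T, (∫ t in Ioc (0:ℝ) x, g2 t) * deriv φ x
      = - ∫ t in Ioc (0:ℝ) T, g2 t * φ t := by
    rw [fubini_tri hg2i hdφ, ← MeasureTheory.integral_neg]
    refine setIntegral_congr_fun measurableSet_Ioc fun t ht => ?_
    have h2 : ∫ x in Ioc t T, deriv φ x = φ T - φ t := by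
      rw [← intervalIntegral.integral_of_le ht.2, hftc t T]
    rw [h2, hout T le_rfl]
    ring
  have hsplit2 : ∫ x in Ioc (0:ℝ) T, (-(v x) * deriv φ x + v x * (2 * w x + v x) * φ x)
      = (∫ x in Ioc (0:ℝ) T, g2 x * φ x) - ∫ x in Ioc (0:ℝ) T, v x * deriv φ x := by
    have e1 : ∫ x in Ioc (0:ℝ) T, (-(v x) * deriv φ x + v x * (2 * w x + v x) * φ x)
        = ∫ x in Ioc (0:ℝ) T, (g2 x * φ x - v x * deriv φ x) :=
      setIntegral_congr_fun measurableSet_Ioc fun x _ => by simp only [hg2]; ring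
    rw [e1, integral_sub hint3 hint1]
  rw [hsplitset, hsplit2, hsub1, hfub, hout T le_rfl]
  ring

lemma exp_sq_inv (P : ℝ) : ((Real.exp P) ^ 2)⁻¹ = Real.exp (-2 * P) := by
  rw [sq, ← Real.exp_add, ← Real.exp_neg]
  congr 1
  ring

lemma int_Iio_Ioi {f : ℝ → ℝ} (h1 : IntegrableOn f (Iio 0)) (h2 : IntegrableOn f (Ioi 0)) :
    Integrable f := by
  have h0 : IntegrableOn f {(0:ℝ)} := by
    rw [IntegrableOn, Measure.restrict_eq_zero.2 Real.volume_singleton]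
    exact integrable_zero_measure
  have h3 : IntegrableOn f (Iio 0 ∪ {0} ∪ Ioi 0) := (h1.union h0).union h2
  have h4 : Iio (0:ℝ) ∪ {0} ∪ Ioi 0 = univ := by
    ext y
    simp only [Set.mem_union, Set.mem_Iio, Set.mem_singleton_iff, Set.mem_Ioi, Set.mem_univ,
      iff_true]
    rcases lt_trichotomy y 0 with h | h | h
    · exact Or.inl (Or.inl h)
    · exact Or.inl (Or.inr h)
    · exact Or.inr h
  rwa [h4, integrableOn_univ] at h3

lemma int_split {f : ℝ → ℝ} (hf : Integrable f) :
    ∫ x, f x = (∫ x in Iio (0:ℝ), f x) + ∫ x in Ioi (0:ℝ), f x := by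
  have h := MeasureTheory.integral_add_compl (measurableSet_Iic (a := (0:ℝ))) hf
  rw [Set.compl_Iic] at h
  rw [← h]
  congr 1
  exact setIntegral_congr_set Iio_ae_eq_Iic |>.symm

lemma vf_def (w : ℝ → ℝ) (α x : ℝ) : vf w α x = α * Ef w x / hf w α x := rfl


/-- With the Riccati representatives `u₊, u₋` constructed from `(w₊, w₋, α)`,
the distributions `q₊ = u₊' + u₊²` and `q₋ = u₋' + u₋²` coincide in `H⁻¹(ℝ)`
(tested against smooth compactly supported functions). -/
theorem stmt_9 (wp wm : ℝ → ℝ) (α : ℝ) (hα : 0 ≤ α)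
    (hwp1 : IntegrableOn wp (Set.Ioi 0))
    (hwp2 : IntegrableOn (fun x => (wp x) ^ 2) (Set.Ioi 0))
    (hwm1 : IntegrableOn wm (Set.Iio 0))
    (hwm2 : IntegrableOn (fun x => (wm x) ^ 2) (Set.Iio 0))
    (yp ym up um : ℝ → ℝ)
    (hyp_pos : ∀ x : ℝ, 0 < x → yp x = Real.exp (∫ t in (0:ℝ)..x, wp t))
    (hym_neg : ∀ x : ℝ, x < 0 → ym x = Real.exp (∫ t in (0:ℝ)..x, wm t))
    (hyp_neg : ∀ x : ℝ, x < 0 →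
      yp x = ym x * (1 + α * ∫ s in x..(0:ℝ), ((ym s) ^ 2)⁻¹))
    (hym_pos : ∀ x : ℝ, 0 < x →
      ym x = yp x * (1 + α * ∫ s in (0:ℝ)..x, ((yp s) ^ 2)⁻¹))
    (hup_pos : ∀ x : ℝ, 0 < x → up x = wp x)
    (hup_neg : ∀ x : ℝ, x < 0 →
      up x = wm x - α * ((ym x) ^ 2)⁻¹ / (1 + α * ∫ s in x..(0:ℝ), ((ym s) ^ 2)⁻¹))
    (hum_neg : ∀ x : ℝ, x < 0 → um x = wm x)
    (hum_pos : ∀ x : ℝ, 0 < x →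
      um x = wp x + α * ((yp x) ^ 2)⁻¹ / (1 + α * ∫ s in (0:ℝ)..x, ((yp s) ^ 2)⁻¹)) :
    ∀ φ : ℝ → ℝ, ContDiff ℝ (⊤ : ℕ∞) φ → HasCompactSupport φ →
      (∫ x : ℝ, (-(up x) * deriv φ x + (up x) ^ 2 * φ x))
        = ∫ x : ℝ, (-(um x) * deriv φ x + (um x) ^ 2 * φ x) := by
  intro φ hφ hφc
  classical
  have hφcont : Continuous φ := hφ.continuous
  have hdφ : Continuous (deriv φ) := hφ.continuous_deriv (by simp)
  have hdφcs : HasCompactSupport (deriv φ) := hφc.deriv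
  have hdφint : Integrable (deriv φ) := hdφ.integrable_of_hasCompactSupport hdφcs
  have hφint : Integrable φ := hφcont.integrable_of_hasCompactSupport hφc
  obtain ⟨Cφ, hCφ⟩ := hφc.exists_bound_of_continuous hφcont
  obtain ⟨Cd, hCd⟩ := hdφcs.exists_bound_of_continuous hdφ
  have hCφ0 : 0 ≤ Cφ := le_trans (norm_nonneg _) (hCφ 0)
  set wp' : ℝ → ℝ := (Set.Ioi (0:ℝ)).indicator wp with hwp'def
  have hwp'int : Integrable wp' := (integrable_indicator_iff measurableSet_Ioi).2 hwp1
  set wm' : ℝ → ℝ := (Set.Iio (0:ℝ)).indicator wm with hwm'def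
  have hwm'int : Integrable wm' := (integrable_indicator_iff measurableSet_Iio).2 hwm1
  set wr : ℝ → ℝ := fun t => -wm' (-t) with hwrdef
  have hwrint : Integrable wr := hwm'int.comp_neg.neg
  have hwp'eq : ∀ t : ℝ, 0 < t → wp' t = wp t := fun t ht => Set.indicator_of_mem ht wp
  have hwm'eq : ∀ t : ℝ, t < 0 → wm' t = wm t := fun t ht =>
    Set.indicator_of_mem (show t ∈ Set.Iio (0:ℝ) from ht) wm
  -- identities for the positive side
  have hprimp : ∀ s : ℝ, 0 ≤ s → prim wp' s = ∫ t in (0:ℝ)..s, wp t := by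
    intro s hs
    rw [prim, intervalIntegral.integral_of_le hs, intervalIntegral.integral_of_le hs]
    exact setIntegral_congr_fun measurableSet_Ioc fun t ht => hwp'eq t ht.1
  have hypE : ∀ x : ℝ, 0 < x → ((yp x) ^ 2)⁻¹ = Ef wp' x := by
    intro x hx
    rw [hyp_pos x hx, Ef, hprimp x hx.le, exp_sq_inv]
  have hymE : ∀ x : ℝ, x < 0 → ((ym x) ^ 2)⁻¹ = Ef wm' x := by
    intro x hx
    have hprimm : prim wm' x = ∫ t in (0:ℝ)..x, wm t := by
      rw [prim, intervalIntegral.integral_symm, intervalIntegral.integral_symm x 0,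
        intervalIntegral.integral_of_le hx.le, intervalIntegral.integral_of_le hx.le,
        integral_Ioc_eq_integral_Ioo, integral_Ioc_eq_integral_Ioo]
      congr 1
      exact setIntegral_congr_fun measurableSet_Ioo fun t ht => hwm'eq t ht.2
    rw [hym_neg x hx, Ef, hprimm, exp_sq_inv]
  have humA : ∀ x : ℝ, 0 < x → um x = wp x + vf wp' α x := by
    intro x hx
    rw [hum_pos x hx, hypE x hx]
    have h1 : ∫ s in (0:ℝ)..x, ((yp s) ^ 2)⁻¹ = ∫ t in (0:ℝ)..x, Ef wp' t := by
      rw [intervalIntegral.integral_of_le hx.le, intervalIntegral.integral_of_le hx.le]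
      exact setIntegral_congr_fun measurableSet_Ioc fun s hs => hypE s hs.1
    rw [h1]
    rfl
  -- reflection identities
  have hprimr : ∀ s : ℝ, prim wr s = prim wm' (-s) := by
    intro s
    have h1 : (∫ t in (0:ℝ)..s, wr t) = -∫ t in (0:ℝ)..s, wm' (-t) := by
      rw [← intervalIntegral.integral_neg]
    have h2 : (∫ t in (0:ℝ)..s, wm' (-t)) = ∫ t in (-s)..(0:ℝ), wm' t := by
      simpa using intervalIntegral.integral_comp_neg (a := (0:ℝ)) (b := s) (f := wm')
    rw [prim, prim, h1, h2, intervalIntegral.integral_symm (-s) 0]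
  have hEfr : ∀ s : ℝ, Ef wr s = Ef wm' (-s) := fun s => by rw [Ef, Ef, hprimr]
  have hhfr : ∀ x : ℝ, hf wr α (-x) = 1 + α * ∫ t in x..(0:ℝ), Ef wm' t := by
    intro x
    rw [hf]
    congr 2
    calc ∫ t in (0:ℝ)..(-x), Ef wr t = ∫ t in (0:ℝ)..(-x), Ef wm' (-t) :=
          intervalIntegral.integral_congr fun t _ => hEfr t
      _ = ∫ t in x..(0:ℝ), Ef wm' t := by
          simpa using intervalIntegral.integral_comp_neg (a := (0:ℝ)) (b := -x) (f := Ef wm')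
  have hBveq : ∀ x : ℝ, x < 0 →
      vf wr α (-x) = α * ((ym x) ^ 2)⁻¹ / (1 + α * ∫ s in x..(0:ℝ), ((ym s) ^ 2)⁻¹) := by
    intro x hx
    have h1 : ∫ s in x..(0:ℝ), ((ym s) ^ 2)⁻¹ = ∫ s in x..(0:ℝ), Ef wm' s := by
      rw [intervalIntegral.integral_of_le hx.le, intervalIntegral.integral_of_le hx.le,
        integral_Ioc_eq_integral_Ioo, integral_Ioc_eq_integral_Ioo]
      exact setIntegral_congr_fun measurableSet_Ioo fun s hs => hymE s hs.2
    rw [h1, vf_def, hEfr, neg_neg, hymE x hx, hhfr]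
  have hupB : ∀ x : ℝ, x < 0 → up x = wm x - vf wr α (-x) := by
    intro x hx
    rw [hup_neg x hx, hBveq x hx]
  -- bounds
  have hBpnn : (0:ℝ) ≤ α * Real.exp (2 * ∫ t, |wp' t|) :=
    mul_nonneg hα (Real.exp_pos _).le
  have hBrnn : (0:ℝ) ≤ α * Real.exp (2 * ∫ t, |wr t|) :=
    mul_nonneg hα (Real.exp_pos _).le
  have hAnn : ∀ x : ℝ, 0 ≤ x → 0 ≤ vf wp' α x := fun x hx => vf_nonneg hwp'int hα hx
  have hAb : ∀ x : ℝ, 0 ≤ x → vf wp' α x ≤ α * Real.exp (2 * ∫ t, |wp' t|) :=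
    fun x hx => vf_le hwp'int hα hx
  have hBvnn : ∀ x : ℝ, x ≤ 0 → 0 ≤ vf wr α (-x) :=
    fun x hx => vf_nonneg hwrint hα (by linarith)
  have hBvb : ∀ x : ℝ, x ≤ 0 → vf wr α (-x) ≤ α * Real.exp (2 * ∫ t, |wr t|) :=
    fun x hx => vf_le hwrint hα (by linarith)
  have hAmeas : Measurable (vf wp' α) := vf_measurable _ hwp'int α
  have hBvmeas : Measurable (fun x : ℝ => vf wr α (-x)) :=
    (vf_measurable _ hwrint α).comp measurable_neg
  -- integrability of base pieces
  have hgpint : IntegrableOn (fun x => -(wp x) * deriv φ x + wp x ^ 2 * φ x) (Ioi 0) := by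
    have h1 : Integrable (fun x => (-deriv φ x) * wp x) (volume.restrict (Ioi 0)) :=
      hwp1.bdd_mul hdφ.neg.aestronglyMeasurable.restrict
        (c := Cd) (ae_of_all _ fun x => by simpa using hCd x)
    have h2 : Integrable (fun x => φ x * wp x ^ 2) (volume.restrict (Ioi 0)) :=
      hwp2.bdd_mul hφcont.aestronglyMeasurable.restrict (ae_of_all _ hCφ)
    exact MeasureTheory.IntegrableOn.congr_fun (h1.add h2)
      (fun x _ => by simp only [Pi.add_apply]; ring) measurableSet_Ioi
  have hgmint : IntegrableOn (fun x => -(wm x) * deriv φ x + wm x ^ 2 * φ x) (Iio 0) := by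
    have h1 : Integrable (fun x => (-deriv φ x) * wm x) (volume.restrict (Iio 0)) :=
      hwm1.bdd_mul hdφ.neg.aestronglyMeasurable.restrict
        (c := Cd) (ae_of_all _ fun x => by simpa using hCd x)
    have h2 : Integrable (fun x => φ x * wm x ^ 2) (volume.restrict (Iio 0)) :=
      hwm2.bdd_mul hφcont.aestronglyMeasurable.restrict (ae_of_all _ hCφ)
    exact MeasureTheory.IntegrableOn.congr_fun (h1.add h2)
      (fun x _ => by simp only [Pi.add_apply]; ring) measurableSet_Iio
  have hdpint : IntegrableOn
      (fun x => -(vf wp' α x) * deriv φ x + vf wp' α x * (2 * wp' x + vf wp' α x) * φ x)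
      (Ioi 0) := by
    have h1 : IntegrableOn (fun x => (-(vf wp' α x)) * deriv φ x) (Ioi 0) := by
      refine helper_bdd measurableSet_Ioi hdφint.integrableOn
        hAmeas.neg.aestronglyMeasurable.restrict
        (C := α * Real.exp (2 * ∫ t, |wp' t|)) ?_
      intro t ht
      rw [abs_neg, abs_of_nonneg (hAnn t (le_of_lt ht))]
      exact hAb t (le_of_lt ht)
    have h2 : IntegrableOn (fun x => (2 * vf wp' α x * φ x) * wp' x) (Ioi 0) := by
      refine helper_bdd measurableSet_Ioi hwp'int.integrableOn
        (((hAmeas.const_mul 2).mul hφcont.measurable).aestronglyMeasurable.restrict)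
        (C := 2 * (α * Real.exp (2 * ∫ t, |wp' t|)) * Cφ) ?_
      intro t ht
      have ha := hAnn t (le_of_lt ht)
      have hb := hAb t (le_of_lt ht)
      have hc : |φ t| ≤ Cφ := by simpa [Real.norm_eq_abs] using hCφ t
      rw [abs_mul, abs_mul, abs_of_nonneg (by norm_num : (0:ℝ) ≤ 2),
        abs_of_nonneg ha]
      nlinarith [abs_nonneg (φ t)]
    have h3 : IntegrableOn (fun x => (vf wp' α x ^ 2) * φ x) (Ioi 0) := by
      refine helper_bdd measurableSet_Ioi hφint.integrableOn
        ((hAmeas.pow_const 2).aestronglyMeasurable.restrict)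
        (C := (α * Real.exp (2 * ∫ t, |wp' t|)) ^ 2) ?_
      intro t ht
      have ha := hAnn t (le_of_lt ht)
      have hb := hAb t (le_of_lt ht)
      rw [abs_of_nonneg (sq_nonneg _)]
      nlinarith
    exact MeasureTheory.IntegrableOn.congr_fun ((h1.add h2).add h3)
      (fun x _ => by simp only [Pi.add_apply]; ring) measurableSet_Ioi
  have hFIio : IntegrableOn
      (fun x => vf wr α (-x) * deriv φ x - 2 * wm' x * vf wr α (-x) * φ x
        + vf wr α (-x) ^ 2 * φ x) (Iio 0) := by
    have h1 : IntegrableOn (fun x => vf wr α (-x) * deriv φ x) (Iio 0) := by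
      refine helper_bdd measurableSet_Iio hdφint.integrableOn
        hBvmeas.aestronglyMeasurable.restrict
        (C := α * Real.exp (2 * ∫ t, |wr t|)) ?_
      intro t ht
      rw [abs_of_nonneg (hBvnn t (le_of_lt ht))]
      exact hBvb t (le_of_lt ht)
    have h2 : IntegrableOn (fun x => (-(2 * vf wr α (-x) * φ x)) * wm' x) (Iio 0) := by
      refine helper_bdd measurableSet_Iio hwm'int.integrableOn
        ((((hBvmeas.const_mul 2).mul hφcont.measurable).neg).aestronglyMeasurable.restrict)
        (C := 2 * (α * Real.exp (2 * ∫ t, |wr t|)) * Cφ) ?_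
      intro t ht
      have ha := hBvnn t (le_of_lt ht)
      have hb := hBvb t (le_of_lt ht)
      have hc : |φ t| ≤ Cφ := by simpa [Real.norm_eq_abs] using hCφ t
      rw [abs_neg, abs_mul, abs_mul, abs_of_nonneg (by norm_num : (0:ℝ) ≤ 2),
        abs_of_nonneg ha]
      nlinarith [abs_nonneg (φ t)]
    have h3 : IntegrableOn (fun x => (vf wr α (-x) ^ 2) * φ x) (Iio 0) := by
      refine helper_bdd measurableSet_Iio hφint.integrableOn
        ((hBvmeas.pow_const 2).aestronglyMeasurable.restrict)
        (C := (α * Real.exp (2 * ∫ t, |wr t|)) ^ 2) ?_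
      intro t ht
      have ha := hBvnn t (le_of_lt ht)
      have hb := hBvb t (le_of_lt ht)
      rw [abs_of_nonneg (sq_nonneg _)]
      nlinarith
    exact MeasureTheory.IntegrableOn.congr_fun ((h1.add h2).add h3)
      (fun x _ => by simp only [Pi.add_apply]; ring) measurableSet_Iio
  -- integrability of the full integrands
  have hfpIoi : IntegrableOn (fun x => -(up x) * deriv φ x + up x ^ 2 * φ x) (Ioi 0) :=
    MeasureTheory.IntegrableOn.congr_fun hgpint
      (fun x hx => by rw [hup_pos x hx]) measurableSet_Ioi
  have hfmIoi : IntegrableOn (fun x => -(um x) * deriv φ x + um x ^ 2 * φ x) (Ioi 0) :=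
    MeasureTheory.IntegrableOn.congr_fun (hgpint.add hdpint)
      (fun x hx => by
        simp only [Pi.add_apply]
        rw [humA x hx, hwp'eq x hx]
        ring) measurableSet_Ioi
  have hfmIio : IntegrableOn (fun x => -(um x) * deriv φ x + um x ^ 2 * φ x) (Iio 0) :=
    MeasureTheory.IntegrableOn.congr_fun hgmint
      (fun x hx => by rw [hum_neg x hx]) measurableSet_Iio
  have hfpIio : IntegrableOn (fun x => -(up x) * deriv φ x + up x ^ 2 * φ x) (Iio 0) :=
    MeasureTheory.IntegrableOn.congr_fun (hgmint.add hFIio)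
      (fun x hx => by
        simp only [Pi.add_apply]
        rw [hupB x hx, hwm'eq x hx]
        ring) measurableSet_Iio
  -- mainplus on the positive side
  have hplus : ∫ x in Ioi (0:ℝ),
      (-(vf wp' α x) * deriv φ x + vf wp' α x * (2 * wp' x + vf wp' α x) * φ x) = α * φ 0 :=
    mainplus hwp'int hα hφ hφc
  -- reflected mainplus on the negative side
  have hψ : ContDiff ℝ (⊤ : ℕ∞) (fun s : ℝ => φ (-s)) := hφ.comp contDiff_neg
  have hψc : HasCompactSupport (fun s : ℝ => φ (-s)) :=
    hφc.comp_homeomorph (Homeomorph.neg ℝ)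
  have hminus' := mainplus hwrint hα hψ hψc
  have hminus : ∫ x in Iio (0:ℝ),
      (vf wr α (-x) * deriv φ x - 2 * wm' x * vf wr α (-x) * φ x
        + vf wr α (-x) ^ 2 * φ x) = α * φ 0 := by
    have hFcomp : ∀ s : ℝ,
        (-(vf wr α s) * deriv (fun s : ℝ => φ (-s)) s
          + vf wr α s * (2 * wr s + vf wr α s) * (fun s : ℝ => φ (-s)) s)
        = (vf wr α (-(-s)) * deriv φ (-s) - 2 * wm' (-s) * vf wr α (-(-s)) * φ (-s)
            + vf wr α (-(-s)) ^ 2 * φ (-s)) := by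
      intro s
      rw [deriv_comp_neg, neg_neg, hwrdef]
      ring
    have h1 : ∫ s in Ioi (0:ℝ),
        (vf wr α (-(-s)) * deriv φ (-s) - 2 * wm' (-s) * vf wr α (-(-s)) * φ (-s)
          + vf wr α (-(-s)) ^ 2 * φ (-s)) = α * φ 0 := by
      refine (setIntegral_congr_fun measurableSet_Ioi fun s _ => (hFcomp s).symm).trans ?_
      rw [hminus']
      norm_num
    have h2 := integral_comp_neg_Ioi (0:ℝ)
      (fun x => vf wr α (-x) * deriv φ x - 2 * wm' x * vf wr α (-x) * φ x
        + vf wr α (-x) ^ 2 * φ x)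
    rw [neg_zero] at h2
    have h3 : ∫ x in Iio (0:ℝ),
        (vf wr α (-x) * deriv φ x - 2 * wm' x * vf wr α (-x) * φ x
          + vf wr α (-x) ^ 2 * φ x)
        = ∫ x in Iic (0:ℝ),
        (vf wr α (-x) * deriv φ x - 2 * wm' x * vf wr α (-x) * φ x
          + vf wr α (-x) ^ 2 * φ x) := setIntegral_congr_set Iio_ae_eq_Iic
    rw [h3, ← h2]
    exact h1
  -- assemble
  have hfpint : Integrable (fun x => -(up x) * deriv φ x + up x ^ 2 * φ x) :=
    int_Iio_Ioi hfpIio hfpIoi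
  have hfmint : Integrable (fun x => -(um x) * deriv φ x + um x ^ 2 * φ x) :=
    int_Iio_Ioi hfmIio hfmIoi
  rw [int_split hfpint, int_split hfmint]
  have e1 : ∫ x in Ioi (0:ℝ), (-(um x) * deriv φ x + um x ^ 2 * φ x)
      = (∫ x in Ioi (0:ℝ), (-(up x) * deriv φ x + up x ^ 2 * φ x)) + α * φ 0 := by
    have h2 : ∫ x in Ioi (0:ℝ), (-(um x) * deriv φ x + um x ^ 2 * φ x)
        = ∫ x in Ioi (0:ℝ), ((-(up x) * deriv φ x + up x ^ 2 * φ x)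
            + (-(vf wp' α x) * deriv φ x + vf wp' α x * (2 * wp' x + vf wp' α x) * φ x)) := by
      refine setIntegral_congr_fun measurableSet_Ioi fun x hx => ?_
      rw [humA x hx, hup_pos x hx, hwp'eq x hx]
      ring
    rw [h2, integral_add hfpIoi hdpint, hplus]
  have e2 : ∫ x in Iio (0:ℝ), (-(up x) * deriv φ x + up x ^ 2 * φ x)
      = (∫ x in Iio (0:ℝ), (-(um x) * deriv φ x + um x ^ 2 * φ x)) + α * φ 0 := by
    have h2 : ∫ x in Iio (0:ℝ), (-(up x) * deriv φ x + up x ^ 2 * φ x)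
        = ∫ x in Iio (0:ℝ), ((-(um x) * deriv φ x + um x ^ 2 * φ x)
            + (vf wr α (-x) * deriv φ x - 2 * wm' x * vf wr α (-x) * φ x
              + vf wr α (-x) ^ 2 * φ x)) := by
      refine setIntegral_congr_fun measurableSet_Iio fun x hx => ?_
      rw [hupB x hx, hum_neg x hx, hwm'eq x hx]
      ring
    rw [h2, integral_add hfmIio hFIio, hminus]
  rw [e1, e2]
  ring
end Stmt9
end
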